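/- Let u ∈ C and λ satisfy the variational inequality (VI), and suppose λ ∈ L^∞(Ω;L²(0,T)) satisfies: for a.e. x ∈ Ω, ‖λ(x,·)‖_{L²(0,T)} ≤ 1 whenever u(x,·) = 0 a.e. in (0,T), and λ(x,·) = u(x,·)/‖u(x,·)‖_{L²(0,T)} whenever u(x,·) ≠ 0 in L²(0,T). Then for almost every x ∈ Ω: u(x,·) = 0 almost everywhere in (0,T) if and only if ‖d(x,·)‖_{L²(0,T)} ≤ κ. -/

import Mathlib

/-!
Testing the variational inequality with functions equal to a constant `c ∈ [ub, uh]` on a set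
and to `u` elsewhere gives `0 ≤ (d + κλ + νu)(c - u)` almost everywhere. On a slice where
`u(x,·) = 0`, the choices `c = ub < 0 < uh` force `d = -κλ`, so `‖d‖ = κ‖λ‖ ≤ κ`. On a slice
where `u(x,·) ≠ 0` we have `λ = u/‖u‖`, and integrating the case `c = 0` gives
`κ‖u‖ + ν‖u‖² ≤ -∫ d u ≤ ‖d‖‖u‖` by Cauchy–Schwarz, hence `‖d‖ > κ`.
-/

open MeasureTheory Set

namespace MeasureTheory

variable {α β : Type*} [MeasurableSpace α] [MeasurableSpace β]

theorem abs_integral_mul_le_sqrt_mul_sqrt {μ : Measure α} {f g : α → ℝ}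
    (hf : MemLp f 2 μ) (hg : MemLp g 2 μ) :
    |∫ a, f a * g a ∂μ| ≤ √(∫ a, f a ^ 2 ∂μ) * √(∫ a, g a ^ 2 ∂μ) := by
  calc |∫ a, f a * g a ∂μ| ≤ ∫ a, ‖f a‖ * ‖g a‖ ∂μ := by
        rw [← Real.norm_eq_abs]
        simpa only [norm_mul] using norm_integral_le_integral_norm (fun a => f a * g a)
    _ ≤ (∫ a, ‖f a‖ ^ (2 : ℝ) ∂μ) ^ (1 / (2 : ℝ)) * (∫ a, ‖g a‖ ^ (2 : ℝ) ∂μ) ^ (1 / (2 : ℝ)) :=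
        integral_mul_norm_le_Lp_mul_Lq .two_two (by simpa using hf) (by simpa using hg)
    _ = √(∫ a, f a ^ 2 ∂μ) * √(∫ a, g a ^ 2 ∂μ) := by
        simp only [Real.rpow_two, Real.norm_eq_abs, sq_abs, Real.sqrt_eq_rpow]

theorem MemLp.two_prod_right_ae {μ : Measure α} {ν : Measure β} [SFinite μ] [SFinite ν]
    {f : α × β → ℝ} (hf : MemLp f 2 (μ.prod ν)) :
    ∀ᵐ x ∂μ, MemLp (fun y => f (x, y)) 2 ν := by
  filter_upwards [hf.1.prodMk_left, hf.integrable_sq.prod_right_ae] with x hmeas hsq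
  exact (memLp_two_iff_integrable_sq hmeas).2 hsq

/-- `f` is integrable on each of the sets `{|f| ≤ n}`, which exhaust the space. -/
theorem ae_nonneg_of_forall_integrableOn_setIntegral_nonneg {μ : Measure α} [SigmaFinite μ]
    {f : α → ℝ} (hf : AEStronglyMeasurable f μ)
    (h : ∀ s, MeasurableSet s → IntegrableOn f s μ → 0 ≤ ∫ x in s, f x ∂μ) :
    0 ≤ᵐ[μ] f := by
  set S : ℕ → Set α := fun n => {x | |hf.mk f x| ≤ n}
  have hS : ∀ n, MeasurableSet (S n) := fun n =>
    measurableSet_le hf.stronglyMeasurable_mk.measurable.abs measurable_const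
  have hcover : ⋃ n, S n = univ :=
    eq_univ_of_forall fun x => mem_iUnion.2 (exists_nat_ge |hf.mk f x|)
  have hint : ∀ n t, MeasurableSet t → μ.restrict (S n) t < ⊤ →
      IntegrableOn f t (μ.restrict (S n)) := by
    intro n t ht hμt
    refine Measure.integrableOn_of_bounded hμt.ne hf.restrict (M := n) ?_
    refine ae_restrict_of_ae ?_
    filter_upwards [ae_restrict_of_ae hf.ae_eq_mk, ae_restrict_mem (hS n)] with x hx hxS
    rw [Real.norm_eq_abs, hx]
    exact hxS
  rw [Filter.EventuallyLE, ← Measure.restrict_univ (μ := μ), ← hcover, ae_restrict_iUnion_iff]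
  intro n
  refine ae_nonneg_of_forall_setIntegral_nonneg_of_sigmaFinite (hint n) fun t ht hμt => ?_
  have hint_t := hint n t ht hμt
  rw [IntegrableOn, Measure.restrict_restrict ht] at hint_t
  rw [Measure.restrict_restrict ht]
  exact h _ (ht.inter (hS n)) hint_t

theorem ae_mul_sub_nonneg_of_forall_integral_mul_sub_nonneg {μ : Measure α} {ν : Measure β}
    [SigmaFinite μ] [SigmaFinite ν] {F u : α → β → ℝ} {a b c : ℝ}
    (hF : AEStronglyMeasurable (fun p : α × β => F p.1 p.2) (μ.prod ν))
    (hu : Measurable (fun p : α × β => u p.1 p.2)) (hac : a ≤ c) (hcb : c ≤ b)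
    (hu_mem : ∀ᵐ p ∂(μ.prod ν), a ≤ u p.1 p.2 ∧ u p.1 p.2 ≤ b)
    (hVI : ∀ v : α → β → ℝ, Measurable (fun p : α × β => v p.1 p.2) →
      (∀ᵐ p ∂(μ.prod ν), a ≤ v p.1 p.2 ∧ v p.1 p.2 ≤ b) →
      0 ≤ ∫ x, ∫ y, F x y * (v x y - u x y) ∂ν ∂μ) :
    ∀ᵐ p ∂(μ.prod ν), 0 ≤ F p.1 p.2 * (c - u p.1 p.2) := by
  classical
  refine ae_nonneg_of_forall_integrableOn_setIntegral_nonneg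
    (hF.mul (measurable_const.sub hu).aestronglyMeasurable) fun s hs hint => ?_
  set v : α → β → ℝ := fun x y => if (x, y) ∈ s then c else u x y
  have hv_meas : Measurable (fun p : α × β => v p.1 p.2) :=
    Measurable.ite hs measurable_const hu
  have hv_mem : ∀ᵐ p ∂(μ.prod ν), a ≤ v p.1 p.2 ∧ v p.1 p.2 ≤ b := by
    filter_upwards [hu_mem] with p hp
    by_cases hps : p ∈ s <;> simp [v, hps, hac, hcb, hp]
  have hindicator : ∀ x y, F x y * (v x y - u x y)
      = s.indicator (fun p : α × β => F p.1 p.2 * (c - u p.1 p.2)) (x, y) := by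
    intro x y
    by_cases hxy : (x, y) ∈ s <;> simp [v, hxy]
  have hVIv := hVI v hv_meas hv_mem
  simp only [hindicator] at hVIv
  rwa [← integral_prod _ ((integrable_indicator_iff hs).2 hint), integral_indicator hs] at hVIv

end MeasureTheory

section DirectionalSparsity

variable {β : Type*} [MeasurableSpace β] {μ : Measure β} {d u l : β → ℝ} {κ ν : ℝ}

theorem sqrt_integral_sq_le_of_ae_eq_zero {a b : ℝ} (hκ : 0 ≤ κ) (ha : a < 0) (hb : 0 < b)
    (hu : ∀ᵐ t ∂μ, u t = 0)
    (hVIa : ∀ᵐ t ∂μ, 0 ≤ (d t + κ * l t + ν * u t) * (a - u t))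
    (hVIb : ∀ᵐ t ∂μ, 0 ≤ (d t + κ * l t + ν * u t) * (b - u t))
    (hl : √(∫ t, l t ^ 2 ∂μ) ≤ 1) :
    √(∫ t, d t ^ 2 ∂μ) ≤ κ := by
  have hdl : ∀ᵐ t ∂μ, d t ^ 2 = κ ^ 2 * l t ^ 2 := by
    filter_upwards [hu, hVIa, hVIb] with t hut hat hbt
    simp only [hut, mul_zero, add_zero, sub_zero] at hat hbt
    have : d t + κ * l t = 0 := by nlinarith
    rw [eq_neg_of_add_eq_zero_left this]
    ring
  calc √(∫ t, d t ^ 2 ∂μ) = √(κ ^ 2 * ∫ t, l t ^ 2 ∂μ) := by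
        rw [integral_congr_ae hdl, integral_const_mul]
    _ = κ * √(∫ t, l t ^ 2 ∂μ) := by rw [Real.sqrt_mul (sq_nonneg κ), Real.sqrt_sq hκ]
    _ ≤ κ := mul_le_of_le_one_right hκ hl

theorem lt_sqrt_integral_sq_of_not_ae_eq_zero (hν : 0 < ν) (hd : MemLp d 2 μ) (hu : MemLp u 2 μ)
    (hu0 : ¬ ∀ᵐ t ∂μ, u t = 0) (hl : ∀ᵐ t ∂μ, l t = u t / √(∫ s, u s ^ 2 ∂μ))
    (hVI0 : ∀ᵐ t ∂μ, 0 ≤ (d t + κ * l t + ν * u t) * (0 - u t)) :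
    κ < √(∫ t, d t ^ 2 ∂μ) := by
  set N := √(∫ s, u s ^ 2 ∂μ)
  have hU0 : 0 ≤ ∫ s, u s ^ 2 ∂μ := integral_nonneg fun s => sq_nonneg _
  have hN : 0 < N := by
    refine Real.sqrt_pos.2 (hU0.lt_of_ne fun h => hu0 ?_)
    filter_upwards [(integral_eq_zero_iff_of_nonneg (fun s => sq_nonneg _)
      hu.integrable_sq).1 h.symm] with t ht
    exact pow_eq_zero_iff two_ne_zero |>.1 ht
  have hpt : ∀ᵐ t ∂μ, κ / N * u t ^ 2 + ν * u t ^ 2 ≤ -(d t * u t) := by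
    filter_upwards [hl, hVI0] with t hlt ht
    rw [hlt] at ht
    linarith [show (d t + κ * (u t / N) + ν * u t) * (0 - u t)
      = -(d t * u t) - (κ / N * u t ^ 2 + ν * u t ^ 2) by ring]
  have hsq := hu.integrable_sq
  have hlower : κ * N + ν * N ^ 2 ≤ -∫ t, d t * u t ∂μ := by
    have hmono : ∫ t, (κ / N * u t ^ 2 + ν * u t ^ 2) ∂μ ≤ ∫ t, -(d t * u t) ∂μ :=
      integral_mono_ae ((hsq.const_mul _).add (hsq.const_mul _)) (hd.integrable_mul hu).neg hpt
    rw [integral_add (hsq.const_mul _) (hsq.const_mul _), integral_const_mul, integral_const_mul,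
      integral_neg, ← Real.sq_sqrt hU0] at hmono
    calc κ * N + ν * N ^ 2 = κ / N * N ^ 2 + ν * N ^ 2 := by field_simp
      _ ≤ _ := hmono
  have hupper := neg_le_of_abs_le (abs_integral_mul_le_sqrt_mul_sqrt hd hu)
  have hprod : (κ + ν * N) * N ≤ √(∫ t, d t ^ 2 ∂μ) * N := by linarith
  calc κ < κ + ν * N := lt_add_of_pos_right κ (mul_pos hν hN)
    _ ≤ √(∫ t, d t ^ 2 ∂μ) := le_of_mul_le_mul_right hprod hN

end DirectionalSparsity

theorem sparsity_in_space_equivalence_general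
    (Ω : Set (Fin 3 → ℝ))
    (T : ℝ)
    (ub uh κ ν : ℝ) (hub : ub < 0) (huh : 0 < uh) (hκ : 0 < κ) (hν : 0 < ν)
    (d u l : (Fin 3 → ℝ) → ℝ → ℝ)
    (hd : MemLp (fun p : (Fin 3 → ℝ) × ℝ => d p.1 p.2) 2
      ((volume.restrict Ω).prod (volume.restrict (Ioo 0 T))))
    (hu_meas : Measurable (fun p : (Fin 3 → ℝ) × ℝ => u p.1 p.2))
    (hu_mem : ∀ᵐ p ∂((volume.restrict Ω).prod (volume.restrict (Ioo 0 T))),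
      ub ≤ u p.1 p.2 ∧ u p.1 p.2 ≤ uh)
    (hl_meas : Measurable (fun p : (Fin 3 → ℝ) × ℝ => l p.1 p.2))
    (hVI : ∀ v : (Fin 3 → ℝ) → ℝ → ℝ,
      Measurable (fun p : (Fin 3 → ℝ) × ℝ => v p.1 p.2) →
      (∀ᵐ p ∂((volume.restrict Ω).prod (volume.restrict (Ioo 0 T))),
        ub ≤ v p.1 p.2 ∧ v p.1 p.2 ≤ uh) →
      0 ≤ ∫ x in Ω, ∫ t in Ioo 0 T,
        (d x t + κ * l x t + ν * u x t) * (v x t - u x t))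
    (hsub : ∀ᵐ x ∂(volume.restrict Ω),
      ((∀ᵐ t ∂(volume.restrict (Ioo 0 T)), u x t = 0) →
        Real.sqrt (∫ t in Ioo 0 T, (l x t) ^ 2) ≤ 1) ∧
      (¬ (∀ᵐ t ∂(volume.restrict (Ioo 0 T)), u x t = 0) →
        ∀ᵐ t ∂(volume.restrict (Ioo 0 T)),
          l x t = u x t / Real.sqrt (∫ s in Ioo 0 T, (u x s) ^ 2))) :
    ∀ᵐ x ∂(volume.restrict Ω),
      ((∀ᵐ t ∂(volume.restrict (Ioo 0 T)), u x t = 0) ↔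
        Real.sqrt (∫ t in Ioo 0 T, (d x t) ^ 2) ≤ κ) := by
  have hF : AEStronglyMeasurable
      (fun p : (Fin 3 → ℝ) × ℝ => d p.1 p.2 + κ * l p.1 p.2 + ν * u p.1 p.2)
      ((volume.restrict Ω).prod (volume.restrict (Ioo 0 T))) :=
    (hd.1.add (hl_meas.const_mul κ).aestronglyMeasurable).add
      (hu_meas.const_mul ν).aestronglyMeasurable
  have hVIc : ∀ c, ub ≤ c → c ≤ uh → ∀ᵐ x ∂(volume.restrict Ω), ∀ᵐ t ∂(volume.restrict (Ioo 0 T)),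
      0 ≤ (d x t + κ * l x t + ν * u x t) * (c - u x t) := fun c hc₁ hc₂ =>
    Measure.ae_ae_of_ae_prod
      (ae_mul_sub_nonneg_of_forall_integral_mul_sub_nonneg hF hu_meas hc₁ hc₂ hu_mem hVI)
  filter_upwards [hVIc 0 hub.le huh.le, hVIc ub le_rfl (hub.trans huh).le,
    hVIc uh (hub.trans huh).le le_rfl, Measure.ae_ae_of_ae_prod hu_mem, hd.two_prod_right_ae,
    hsub] with x hVI0 hVIub hVIuh hux_mem hdx ⟨hl_zero, hl_nonzero⟩
  have hux : MemLp (u x) 2 (volume.restrict (Ioo 0 T)) :=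
    memLp_of_bounded hux_mem (hu_meas.comp measurable_prodMk_left).aestronglyMeasurable 2
  refine ⟨fun hu0 => sqrt_integral_sq_le_of_ae_eq_zero hκ.le hub huh hu0 hVIub hVIuh
    (hl_zero hu0), fun hdκ => ?_⟩
  by_contra hu0
  exact (lt_sqrt_integral_sq_of_not_ae_eq_zero hν hdx hux hu0 (hl_nonzero hu0) hVI0).not_ge hdκ

/-- Directional sparsity in space: if `u ∈ C` and `λ` satisfy the variational
inequality and `λ` satisfies the pointwise subdifferential conditions for
`g_Ω` at `u`, then for a.e. `x ∈ Ω`: `u(x,·) = 0` a.e. in `(0,T)` iff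
`‖d(x,·)‖_{L²(0,T)} ≤ κ`. -/
theorem sparsity_in_space_equivalence
    (Ω : Set (Fin 3 → ℝ)) (hΩo : IsOpen Ω) (hΩb : Bornology.IsBounded Ω)
    (T : ℝ) (hT : 0 < T)
    (ub uh κ ν : ℝ) (hub : ub < 0) (huh : 0 < uh) (hκ : 0 < κ) (hν : 0 < ν)
    (d u l : (Fin 3 → ℝ) → ℝ → ℝ)
    (hd : MemLp (fun p : (Fin 3 → ℝ) × ℝ => d p.1 p.2) 2
      ((volume.restrict Ω).prod (volume.restrict (Ioo 0 T))))
    (hu_meas : Measurable (fun p : (Fin 3 → ℝ) × ℝ => u p.1 p.2))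
    (hu_mem : ∀ᵐ p ∂((volume.restrict Ω).prod (volume.restrict (Ioo 0 T))),
      ub ≤ u p.1 p.2 ∧ u p.1 p.2 ≤ uh)
    (hl_meas : Measurable (fun p : (Fin 3 → ℝ) × ℝ => l p.1 p.2))
    (hl_bdd : ∃ M : ℝ, ∀ᵐ x ∂(volume.restrict Ω),
      Real.sqrt (∫ t in Ioo 0 T, (l x t) ^ 2) ≤ M)
    (hVI : ∀ v : (Fin 3 → ℝ) → ℝ → ℝ,
      Measurable (fun p : (Fin 3 → ℝ) × ℝ => v p.1 p.2) →
      (∀ᵐ p ∂((volume.restrict Ω).prod (volume.restrict (Ioo 0 T))),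
        ub ≤ v p.1 p.2 ∧ v p.1 p.2 ≤ uh) →
      0 ≤ ∫ x in Ω, ∫ t in Ioo 0 T,
        (d x t + κ * l x t + ν * u x t) * (v x t - u x t))
    (hsub : ∀ᵐ x ∂(volume.restrict Ω),
      ((∀ᵐ t ∂(volume.restrict (Ioo 0 T)), u x t = 0) →
        Real.sqrt (∫ t in Ioo 0 T, (l x t) ^ 2) ≤ 1) ∧
      (¬ (∀ᵐ t ∂(volume.restrict (Ioo 0 T)), u x t = 0) →
        ∀ᵐ t ∂(volume.restrict (Ioo 0 T)),
          l x t = u x t / Real.sqrt (∫ s in Ioo 0 T, (u x s) ^ 2))) :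
    ∀ᵐ x ∂(volume.restrict Ω),
      ((∀ᵐ t ∂(volume.restrict (Ioo 0 T)), u x t = 0) ↔
        Real.sqrt (∫ t in Ioo 0 T, (d x t) ^ 2) ≤ κ) :=
  sparsity_in_space_equivalence_general Ω T ub uh κ ν hub huh hκ hν d u l hd hu_meas hu_mem hl_meas
    hVI hsub
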